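/- If G is a 1-homogeneous graph with degree k and least adjacency eigenvalue τ, then χ_vec(G) = θ̄(G) = 1 − k/τ. In particular the vector chromatic number and the Lovász theta of the complement coincide for 1-homogeneous graphs. -/

import Mathlib

/-!
Lower bound: if `M` is feasible for `χ_vec` then, since `A - τ I ⪰ 0`,
`0 ≤ tr (M (A - τ I)) ≤ -n k - τ n (λ - 1)`, i.e. `λ ≥ 1 - k / τ`.
Upper bound: the projection `E` onto the `τ`-eigenspace is a polynomial in `A`, so by
1-homogeneity it has a constant diagonal `b > 0` and a constant value `c` on edges; comparing
diagonals in `A E = τ E` gives `k c = τ b`, so `-(k / (τ b)) E` is feasible for `θ̄` with value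
`1 - k / τ`.
-/

open Polynomial Matrix Finset
open scoped MatrixOrder ComplexOrder

/-- The vector chromatic number, as the optimal value of the SDP:
minimize `λ` subject to `M ⪰ 0`, `M_{vv} = λ - 1` for all `v`, and `M_{uv} ≤ -1`
on edges. -/
noncomputable def chiVecSDP {V : Type} [Fintype V] (G : SimpleGraph V) : ℝ :=
  sInf {lam : ℝ | ∃ M : Matrix V V ℝ, M.PosSemidef ∧ (∀ v, M v v = lam - 1) ∧
    ∀ u v, G.Adj u v → M u v ≤ -1}

/-- The Lovász theta of the complement (strict vector chromatic number), as the
optimal value of the SDP: minimize `λ` subject to `M ⪰ 0`, `M_{vv} = λ - 1` for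
all `v`, and `M_{uv} = -1` on edges. -/
noncomputable def thetaBarSDP {V : Type} [Fintype V] (G : SimpleGraph V) : ℝ :=
  sInf {lam : ℝ | ∃ M : Matrix V V ℝ, M.PosSemidef ∧ (∀ v, M v v = lam - 1) ∧
    ∀ u v, G.Adj u v → M u v = -1}

theorem Polynomial.aeval_mem_of_forall_pow_mem {R A : Type*} [CommSemiring R] [Semiring A]
    [Algebra R A] {S : Submodule R A} {a : A} (h : ∀ m : ℕ, a ^ m ∈ S) (p : R[X]) :
    aeval a p ∈ S := by
  rw [aeval_eq_sum_range]
  exact Submodule.sum_mem _ fun i _ => S.smul_mem _ (h i)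

theorem exists_aeval_eq_cfc_of_finite {A : Type*} {p : A → Prop} [TopologicalSpace A] [Ring A]
    [StarRing A] [Algebra ℝ A] [ContinuousFunctionalCalculus ℝ A p] {a : A} (ha : p a)
    (hfin : (spectrum ℝ a).Finite) (f : ℝ → ℝ) : ∃ q : ℝ[X], aeval a q = cfc f a := by
  classical
  refine ⟨Lagrange.interpolate hfin.toFinset id f, ?_⟩
  rw [← cfc_polynomial _ a ha]
  exact cfc_congr fun x hx =>
    Lagrange.eval_interpolate_at_node f (Set.injOn_id _) (hfin.mem_toFinset.mpr hx)

namespace Matrix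

variable {n : Type*} [Fintype n] [DecidableEq n]

theorem mem_spectrum_iff_exists_mulVec_eq_smul {K : Type*} [Field K] {A : Matrix n n K} {μ : K} :
    μ ∈ spectrum K A ↔ ∃ x, x ≠ 0 ∧ A *ᵥ x = μ • x := by
  rw [← spectrum_toLin', ← Module.End.hasEigenvalue_iff_mem_spectrum]
  refine ⟨fun h => ?_, fun ⟨x, hx, hAx⟩ => ?_⟩
  · obtain ⟨x, hx⟩ := h.exists_hasEigenvector
    exact ⟨x, hx.2, by simpa using hx.apply_eq_smul⟩
  · exact Module.End.hasEigenvalue_of_hasEigenvector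
      ⟨by simpa [Module.End.mem_eigenspace_iff] using hAx, hx⟩

theorem PosSemidef.trace_mul_nonneg {𝕜 : Type*} [RCLike 𝕜] {P Q : Matrix n n 𝕜}
    (hP : P.PosSemidef) (hQ : Q.PosSemidef) : 0 ≤ (P * Q).trace := by
  obtain ⟨B, rfl⟩ := CStarAlgebra.nonneg_iff_eq_star_mul_self.mp hQ.nonneg
  rw [star_eq_conjTranspose, ← mul_assoc, trace_mul_comm, ← mul_assoc]
  exact (hP.mul_mul_conjTranspose_same B).trace_nonneg

theorem IsHermitian.posSemidef_sub_smul_one {A : Matrix n n ℝ} (hA : A.IsHermitian) {τ : ℝ}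
    (h : ∀ μ ∈ spectrum ℝ A, τ ≤ μ) : (A - τ • 1).PosSemidef := by
  rw [← le_iff, ← Algebra.algebraMap_eq_smul_one]
  exact algebraMap_le_of_le_spectrum h hA.isSelfAdjoint

noncomputable def eigenprojection (A : Matrix n n ℝ) (τ : ℝ) : Matrix n n ℝ :=
  cfc (fun x => if x = τ then (1 : ℝ) else 0) A

theorem eigenprojection_posSemidef (A : Matrix n n ℝ) (τ : ℝ) :
    (A.eigenprojection τ).PosSemidef :=
  nonneg_iff_posSemidef.mp <| cfc_nonneg fun x _ => by split_ifs <;> norm_num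

theorem IsHermitian.mul_eigenprojection {A : Matrix n n ℝ} (hA : A.IsHermitian) (τ : ℝ) :
    A * A.eigenprojection τ = τ • A.eigenprojection τ := by
  have hcont := A.finite_real_spectrum.continuousOn (fun x : ℝ => if x = τ then (1 : ℝ) else 0)
  rw [eigenprojection]
  nth_rw 1 [← cfc_id' ℝ A]
  rw [← cfc_mul _ _ A, ← cfc_smul τ _ A]
  congr 1
  funext x
  split_ifs with h <;> simp [h]

theorem IsHermitian.eigenprojection_ne_zero {A : Matrix n n ℝ} (hA : A.IsHermitian) {τ : ℝ}
    (hτ : τ ∈ spectrum ℝ A) : A.eigenprojection τ ≠ 0 := by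
  intro h
  have := eqOn_of_cfc_eq_cfc (h.trans (cfc_zero ℝ A).symm)
    (A.finite_real_spectrum.continuousOn _) (A.finite_real_spectrum.continuousOn _) hA hτ
  simp at this

theorem IsHermitian.exists_aeval_eq_eigenprojection {A : Matrix n n ℝ} (hA : A.IsHermitian)
    (τ : ℝ) : ∃ p : ℝ[X], aeval A p = A.eigenprojection τ :=
  exists_aeval_eq_cfc_of_finite hA A.finite_real_spectrum _

end Matrix

namespace SimpleGraph

/-- `G` is 1-homogeneous iff every power of its adjacency matrix lies in this submodule. -/
def constDiagEdgeSubmodule {V : Type} (G : SimpleGraph V) (R : Type*) [Semiring R] :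
    Submodule R (Matrix V V R) where
  carrier := {M | ∃ b c, (∀ v, M v v = b) ∧ ∀ u v, G.Adj u v → M u v = c}
  zero_mem' := ⟨0, 0, fun _ => rfl, fun _ _ _ => rfl⟩
  add_mem' := by
    rintro M N ⟨b, c, hb, hc⟩ ⟨b', c', hb', hc'⟩
    exact ⟨b + b', c + c', fun v => by simp [hb, hb'], fun u v h => by simp [hc u v h, hc' u v h]⟩
  smul_mem' := by
    rintro r M ⟨b, c, hb, hc⟩
    exact ⟨r * b, r * c, fun v => by simp [hb], fun u v h => by simp [hc u v h]⟩

variable {V : Type} {G : SimpleGraph V} [DecidableRel G.Adj] {k : ℕ} {τ : ℝ}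

theorem nonpos_of_posSemidef_adjMatrix_sub [DecidableEq V] [Nonempty V]
    (hτ : (G.adjMatrix ℝ - τ • 1).PosSemidef) : τ ≤ 0 := by
  obtain ⟨v⟩ := ‹Nonempty V›
  simpa using hτ.diag_nonneg (i := v)

variable [Fintype V]

theorem IsRegularOfDegree.trace_mul_adjMatrix_le (hG : G.IsRegularOfDegree k)
    {M : Matrix V V ℝ} (hM : ∀ u v, G.Adj u v → M u v ≤ -1) :
    (M * G.adjMatrix ℝ).trace ≤ -(Fintype.card V * k) := by
  calc (M * G.adjMatrix ℝ).trace = ∑ v, ∑ u ∈ G.neighborFinset v, M v u := by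
        simp [Matrix.trace]
    _ ≤ ∑ v : V, ∑ u ∈ G.neighborFinset v, (-1 : ℝ) :=
        sum_le_sum fun v _ => sum_le_sum fun u hu => hM v u ((mem_neighborFinset ..).mp hu)
    _ = -(Fintype.card V * k) := by simp [hG.degree_eq]

variable [DecidableEq V]

theorem ne_zero_of_posSemidef_adjMatrix_sub (hτ : (G.adjMatrix ℝ - τ • 1).PosSemidef)
    {u v : V} (huv : G.Adj u v) : τ ≠ 0 := by
  rintro rfl
  have h0 : G.adjMatrix ℝ = 0 :=
    (by simpa using hτ : (G.adjMatrix ℝ).PosSemidef).trace_eq_zero_iff.mp (trace_adjMatrix ℝ G)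
  simpa [huv] using congr_fun (congr_fun h0 u) v

theorem IsRegularOfDegree.le_of_posSemidef [Nonempty V] (hG : G.IsRegularOfDegree k)
    (hτ : (G.adjMatrix ℝ - τ • 1).PosSemidef) {M : Matrix V V ℝ} {lam : ℝ} (hM : M.PosSemidef)
    (hdiag : ∀ v, M v v = lam - 1) (hedge : ∀ u v, G.Adj u v → M u v ≤ -1) :
    1 - k / τ ≤ lam := by
  obtain ⟨v⟩ := ‹Nonempty V›
  have hn : (0 : ℝ) < Fintype.card V := by exact_mod_cast Fintype.card_pos
  have htrace : 0 ≤ (M * G.adjMatrix ℝ).trace - τ * (Fintype.card V * (lam - 1)) := by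
    have hMtrace : M.trace = Fintype.card V * (lam - 1) := by
      simp [Matrix.trace, hdiag, mul_sub]
    have := hM.trace_mul_nonneg hτ
    rwa [mul_sub, trace_sub, Matrix.mul_smul, mul_one, trace_smul, smul_eq_mul, hMtrace] at this
  have hkey : τ * (lam - 1) ≤ -k := by
    have := hG.trace_mul_adjMatrix_le hedge
    nlinarith
  have hlam : 0 ≤ lam - 1 := hdiag v ▸ hM.diag_nonneg
  -- `τ = 0` forces `k = 0`, and then `k / τ = 0` is the right value.
  rcases (nonpos_of_posSemidef_adjMatrix_sub hτ).lt_or_eq with hneg | rfl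
  · rw [sub_le_comm, le_div_iff_of_neg hneg]
    linarith
  · simpa using hlam

theorem IsRegularOfDegree.exists_posSemidef_of_mul_eq_smul [Nonempty V]
    (hG : G.IsRegularOfDegree k) (hτ : (G.adjMatrix ℝ - τ • 1).PosSemidef) {E : Matrix V V ℝ}
    (hE : E.PosSemidef) (hE0 : E ≠ 0) (hAE : G.adjMatrix ℝ * E = τ • E)
    (hmem : E ∈ G.constDiagEdgeSubmodule ℝ) :
    ∃ M : Matrix V V ℝ, M.PosSemidef ∧ (∀ v, M v v = -k / τ) ∧ ∀ u v, G.Adj u v → M u v = -1 := by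
  obtain ⟨v₀⟩ := ‹Nonempty V›
  obtain ⟨b, c, hb, hc⟩ := hmem
  have hb_pos : 0 < b := by
    refine (hb v₀ ▸ hE.diag_nonneg).lt_of_ne fun h0 => hE0 ?_
    exact hE.trace_eq_zero_iff.mp (by simp [Matrix.trace, hb, ← h0])
  have hkc : k * c = τ * b := by
    have := congr_fun (congr_fun hAE v₀) v₀
    rwa [adjMatrix_mul_apply, Matrix.smul_apply, hb, smul_eq_mul,
      sum_congr rfl fun u hu => hc u v₀ (G.adj_symm ((mem_neighborFinset ..).mp hu)),
      sum_const, card_neighborFinset_eq_degree, hG v₀, nsmul_eq_mul] at this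
  have hscale : 0 ≤ -k / (τ * b) :=
    div_nonneg_of_nonpos (by simp) (mul_nonpos_of_nonpos_of_nonneg
      (nonpos_of_posSemidef_adjMatrix_sub hτ) hb_pos.le)
  refine ⟨(-k / (τ * b)) • E, hE.smul hscale, fun v => ?_, fun u v huv => ?_⟩
  · rw [Matrix.smul_apply, hb, smul_eq_mul, div_mul_eq_mul_div, mul_div_mul_right _ _ hb_pos.ne']
  · have := ne_zero_of_posSemidef_adjMatrix_sub hτ huv
    rw [Matrix.smul_apply, hc u v huv, smul_eq_mul]
    field_simp
    linarith

theorem exists_posSemidef_of_forall_pow_mem [Nonempty V]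
    (hhom : ∀ m : ℕ, G.adjMatrix ℝ ^ m ∈ G.constDiagEdgeSubmodule ℝ)
    (hG : G.IsRegularOfDegree k) (hτ : (G.adjMatrix ℝ - τ • 1).PosSemidef)
    (hspec : τ ∈ spectrum ℝ (G.adjMatrix ℝ)) :
    ∃ M : Matrix V V ℝ, M.PosSemidef ∧ (∀ v, M v v = -k / τ) ∧ ∀ u v, G.Adj u v → M u v = -1 := by
  have hA := G.isHermitian_adjMatrix ℝ
  obtain ⟨p, hp⟩ := hA.exists_aeval_eq_eigenprojection τ
  exact hG.exists_posSemidef_of_mul_eq_smul hτ (eigenprojection_posSemidef _ τ)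
    (hA.eigenprojection_ne_zero hspec) (hA.mul_eigenprojection τ)
    (hp ▸ aeval_mem_of_forall_pow_mem hhom p)

end SimpleGraph

theorem chiVecSDP_eq_and_thetaBarSDP_eq {V : Type} [Fintype V] (G : SimpleGraph V) {lam₀ : ℝ}
    (hfeas : ∃ M : Matrix V V ℝ, M.PosSemidef ∧ (∀ v, M v v = lam₀ - 1) ∧
      ∀ u v, G.Adj u v → M u v = -1)
    (hlb : ∀ (lam : ℝ) (M : Matrix V V ℝ), M.PosSemidef → (∀ v, M v v = lam - 1) →
      (∀ u v, G.Adj u v → M u v ≤ -1) → lam₀ ≤ lam) :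
    chiVecSDP G = lam₀ ∧ thetaBarSDP G = lam₀ := by
  obtain ⟨M, hM, hdiag, hedge⟩ := hfeas
  constructor
  · exact IsLeast.csInf_eq ⟨⟨M, hM, hdiag, fun u v h => (hedge u v h).le⟩,
      fun lam ⟨M, hM, hd, he⟩ => hlb lam M hM hd he⟩
  · exact IsLeast.csInf_eq ⟨⟨M, hM, hdiag, hedge⟩,
      fun lam ⟨M, hM, hd, he⟩ => hlb lam M hM hd fun u v h => (he u v h).le⟩

/-- If `G` is 1-homogeneous with degree `k` and least adjacency eigenvalue `τ`, then
`χ_vec(G) = θ̄(G) = 1 - k/τ`. -/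
theorem stmt14 {V : Type} [Fintype V] [DecidableEq V] [Nonempty V]
    (G : SimpleGraph V) [DecidableRel G.Adj] (k : ℕ) (τ : ℝ)
    (hhom : ∀ m : ℕ, ∃ b c : ℝ, (∀ v, (G.adjMatrix ℝ ^ m) v v = b) ∧
      ∀ u v, G.Adj u v → (G.adjMatrix ℝ ^ m) u v = c)
    (hdeg : ∀ v, G.degree v = k)
    (heig : ∃ x : V → ℝ, x ≠ 0 ∧ (G.adjMatrix ℝ).mulVec x = τ • x)
    (hleast : ∀ (μ : ℝ) (x : V → ℝ), x ≠ 0 →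
      (G.adjMatrix ℝ).mulVec x = μ • x → τ ≤ μ) :
    chiVecSDP G = 1 - (k : ℝ) / τ ∧ thetaBarSDP G = 1 - (k : ℝ) / τ := by
  have hG : G.IsRegularOfDegree k := hdeg
  have hA := G.isHermitian_adjMatrix ℝ
  have hτ : (G.adjMatrix ℝ - τ • 1).PosSemidef := hA.posSemidef_sub_smul_one fun μ hμ => by
    obtain ⟨x, hx, hAx⟩ := mem_spectrum_iff_exists_mulVec_eq_smul.mp hμ
    exact hleast μ x hx hAx
  obtain ⟨M, hM, hdiag, hedge⟩ := G.exists_posSemidef_of_forall_pow_mem hhom hG hτ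
    (mem_spectrum_iff_exists_mulVec_eq_smul.mpr heig)
  exact chiVecSDP_eq_and_thetaBarSDP_eq G ⟨M, hM, fun v => by rw [hdiag]; ring, hedge⟩
    fun lam M hM hd he => hG.le_of_posSemidef hτ hM hd he
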